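/- arXiv:math/0501291 — 7 statements merged into one kernel-verified Lean document; each statement's English description precedes it below -/
import Mathlib

section
/- With Q_j defined as the queue-length sup_{i ≤ j} [|A ∩ [i,j]| − |S ∩ [i,j]|]_+, a site j satisfies (j ∈ S and there exists i ≤ j with |A ∩ [i,j]| ≥ |S ∩ [i,j]|) if and only if (j ∈ S and (Q_{j−1} > 0 or j ∈ A)). -/
open Classical in
private lemma card_split (X : Set ℤ) (i j : ℤ) (hij : i ≤ j) :
    (X ∩ Set.Icc i j).ncard
      = (X ∩ Set.Icc i (j - 1)).ncard + (if j ∈ X then 1 else 0) := by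
  have hIcc : Set.Icc i j = insert j (Set.Icc i (j - 1)) := by
    ext x; simp only [Set.mem_Icc, Set.mem_insert_iff]; omega
  have hfin : (X ∩ Set.Icc i (j - 1)).Finite :=
    (Set.finite_Icc i (j - 1)).inter_of_right X
  by_cases hjX : j ∈ X
  · have : X ∩ Set.Icc i j = insert j (X ∩ Set.Icc i (j - 1)) := by
      rw [hIcc, Set.inter_insert_of_mem hjX]
    rw [this, Set.ncard_insert_of_notMem (by simp) hfin]
    simp [hjX]
  · have : X ∩ Set.Icc i j = X ∩ Set.Icc i (j - 1) := by
      rw [hIcc, Set.inter_insert_of_notMem hjX]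
    simp [this, hjX]

open Classical in
/-- with `Q_j = sup_{i ≤ j} [|A ∩ [i,j]| − |S ∩ [i,j]|]_+` (assumed finite),
`j` is a departure site, i.e. `j ∈ S` and `∃ i ≤ j, |A ∩ [i,j]| ≥ |S ∩ [i,j]|`, iff
`j ∈ S` and (`Q_{j−1} > 0` or `j ∈ A`). -/
theorem stmt_1 (A S : Set ℤ) (Q : ℤ → ℤ)
    (hQ : ∀ j : ℤ, IsGreatest
      {v : ℤ | ∃ i ≤ j, v = max 0
        (((A ∩ Set.Icc i j).ncard : ℤ) - ((S ∩ Set.Icc i j).ncard : ℤ))} (Q j)) :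
    ∀ j : ℤ,
      (j ∈ S ∧ ∃ i ≤ j, (S ∩ Set.Icc i j).ncard ≤ (A ∩ Set.Icc i j).ncard)
        ↔ (j ∈ S ∧ (0 < Q (j - 1) ∨ j ∈ A)) := by
  intro j
  constructor
  · rintro ⟨hjS, i, hij, hle⟩
    refine ⟨hjS, ?_⟩
    by_cases hjA : j ∈ A
    · exact Or.inr hjA
    · left
      have hAs := card_split A i j hij
      have hSs := card_split S i j hij
      rw [if_neg hjA] at hAs
      rw [if_pos hjS] at hSs
      have hij' : i ≤ j - 1 := by
        rcases lt_or_eq_of_le hij with h | h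
        · omega
        · exfalso
          subst h
          have h1 : (S ∩ Set.Icc i i).ncard = 1 := by
            have : S ∩ Set.Icc i i = {i} := by
              ext x; simp only [Set.mem_inter_iff, Set.mem_Icc, Set.mem_singleton_iff]
              constructor
              · rintro ⟨_, h2, h3⟩; omega
              · rintro rfl; exact ⟨hjS, le_refl _, le_refl _⟩
            rw [this, Set.ncard_singleton]
          have h2 : A ∩ Set.Icc i i = ∅ := by
            ext x
            simp only [Set.mem_inter_iff, Set.mem_Icc, Set.mem_empty_iff_false, iff_false,
              not_and]
            rintro hx h2 h3
            have : x = i := by omega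
            exact hjA (this ▸ hx)
          rw [h1, h2] at hle
          simp at hle
      have hmem : max 0 (((A ∩ Set.Icc i (j - 1)).ncard : ℤ)
          - ((S ∩ Set.Icc i (j - 1)).ncard : ℤ)) ≤ Q (j - 1) :=
        (hQ (j - 1)).2 ⟨i, hij', rfl⟩
      have : ((S ∩ Set.Icc i (j - 1)).ncard : ℤ) < ((A ∩ Set.Icc i (j - 1)).ncard : ℤ) := by
        omega
      have hmax : (1 : ℤ) ≤ max 0 (((A ∩ Set.Icc i (j - 1)).ncard : ℤ)
          - ((S ∩ Set.Icc i (j - 1)).ncard : ℤ)) := le_max_of_le_right (by omega)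
      omega
  · rintro ⟨hjS, hQA⟩
    refine ⟨hjS, ?_⟩
    rcases hQA with hQpos | hjA
    · obtain ⟨i, hij', heq⟩ := (hQ (j - 1)).1
      have hf : ((S ∩ Set.Icc i (j - 1)).ncard : ℤ) < ((A ∩ Set.Icc i (j - 1)).ncard : ℤ) := by
        rw [heq] at hQpos
        rcases le_or_gt (((A ∩ Set.Icc i (j - 1)).ncard : ℤ)
            - ((S ∩ Set.Icc i (j - 1)).ncard : ℤ)) 0 with h | h
        · rw [max_eq_left h] at hQpos; omega
        · omega
      have hij : i ≤ j := by omega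
      refine ⟨i, hij, ?_⟩
      have hAs := card_split A i j hij
      have hSs := card_split S i j hij
      rw [if_pos hjS] at hSs
      split_ifs at hAs <;> omega
    · refine ⟨j, le_refl j, ?_⟩
      have h1 : A ∩ Set.Icc j j = {j} := by
        ext x; simp only [Set.mem_inter_iff, Set.mem_Icc, Set.mem_singleton_iff]
        constructor
        · rintro ⟨_, h2, h3⟩; omega
        · rintro rfl; exact ⟨hjA, le_refl _, le_refl _⟩
      have h2 : (S ∩ Set.Icc j j).ncard ≤ 1 := by
        have : S ∩ Set.Icc j j ⊆ {j} := by
          rintro x ⟨_, hx⟩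
          simp only [Set.mem_Icc] at hx
          simp only [Set.mem_singleton_iff]; omega
        calc (S ∩ Set.Icc j j).ncard ≤ ({j} : Set ℤ).ncard :=
              Set.ncard_le_ncard this (Set.finite_singleton j)
          _ = 1 := Set.ncard_singleton j
      rw [h1, Set.ncard_singleton]
      exact h2
end

section
/- In the cyclic collapse construction on ℤ_N with |A| ≤ |S|, the resulting set D of filled spaces does not depend on the order in which elements of A are processed; specifically, j ∈ D if and only if j ∈ S and there exists some cyclic interval [i,j] with |A ∩ [i,j]| ≥ |S ∩ [i,j]|. -/
/-! The process keeps an invariant: after the arrivals `T` are processed, the filled set `D ⊆ S`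
is matched bijectively with `T` by `ψ`, and no arrival `t` passed a still-free space of `S` on its
way to `ψ t`. Once `T = A`, a free `j ∈ S` gives, for every `i`, an injection of `A ∩ [i, j]` into
`(S ∩ [i, j]) \ {j}`. For a filled `j`, let `[i, j]` run back from `j` to just after the nearest
free space of `S` (or around the whole circle): all of `S ∩ [i, j]` is filled, by arrivals that
cannot have passed that free space, hence by arrivals from `[i, j]`. -/

/-- The cyclic interval `[i,j]` in `ℤ_N`. -/
def cycIcc (N : ℕ) (i j : ZMod N) : Set (ZMod N) :=
  {x : ZMod N | ∃ k : ℕ, k ≤ (j - i).val ∧ x = i + (k : ZMod N)}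

open Classical in
/-- One step of the collapse process: given the service set `S`, the current set `D` of
filled spaces, and an arrival site `i`, fill the first space in the cyclic list
`i, i+1, i+2, …` that lies in `S` and is not yet filled (if such a space exists). -/
noncomputable def collapseStep (N : ℕ) (S : Set (ZMod N)) (D : Set (ZMod N))
    (i : ZMod N) : Set (ZMod N) :=
  if h : ∃ k : ℕ, i + (k : ZMod N) ∈ S \ D then
    insert (i + ((Nat.find h : ℕ) : ZMod N)) D
  else D

namespace ZMod

variable {N : ℕ} [NeZero N]

lemma val_sub_sub_cancel_right {a b c : ZMod N} (h : (c - a).val ≤ (b - a).val) :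
    (b - c).val = (b - a).val - (c - a).val := by
  rw [← val_sub h, sub_sub_sub_cancel_right]

lemma val_sub_sub_cancel_left {a b c : ZMod N} (h : (a - c).val ≤ (a - b).val) :
    (c - b).val = (a - b).val - (a - c).val := by
  rw [← val_sub h, sub_sub_sub_cancel_left]

lemma mem_cycIcc_iff {i j x : ZMod N} : x ∈ cycIcc N i j ↔ (x - i).val ≤ (j - i).val := by
  constructor
  · rintro ⟨k, hk, rfl⟩
    rwa [add_sub_cancel_left, val_natCast_of_lt (hk.trans_lt (val_lt _))]
  · exact fun h ↦ ⟨(x - i).val, h, by rw [natCast_zmod_val, add_sub_cancel]⟩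

lemma mem_cycIcc_iff' {i j x : ZMod N} : x ∈ cycIcc N i j ↔ (j - x).val ≤ (j - i).val := by
  rw [mem_cycIcc_iff]
  constructor
  · intro h
    rw [val_sub_sub_cancel_right h]
    omega
  · intro h
    rw [val_sub_sub_cancel_left h]
    omega

lemma cycIcc_subset_cycIcc {i j t : ZMod N} (ht : t ∈ cycIcc N i j) :
    cycIcc N t j ⊆ cycIcc N i j :=
  fun _ hx ↦ mem_cycIcc_iff'.2 ((mem_cycIcc_iff'.1 hx).trans (mem_cycIcc_iff'.1 ht))

lemma mem_cycIcc_sub_natCast_iff {j x : ZMod N} {m : ℕ} (hm : m < N) :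
    x ∈ cycIcc N (j - m) j ↔ (j - x).val ≤ m := by
  rw [mem_cycIcc_iff', sub_sub_cancel, val_natCast_of_lt hm]

/-- Going forward from `t`, if `s` comes before `w` then `s` is also nearer than `w` to any `j`
lying beyond `w`. -/
lemma val_sub_lt_of_val_sub_le {j s t w : ZMod N} (hs : (j - s).val < (j - w).val)
    (hst : (s - t).val ≤ (w - t).val) : (j - t).val < (j - w).val := by
  by_contra! hwt
  rw [val_sub_sub_cancel_left hwt, val_sub_sub_cancel_left (hs.le.trans hwt)] at hst
  omega

end ZMod

open ZMod

section GreedyMatching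

variable {N : ℕ} [NeZero N]

/-- `ψ t` is the space filled by the arrival at `t`. -/
structure IsGreedyMatching (S T D : Set (ZMod N)) (ψ : ZMod N → ZMod N) : Prop where
  bijOn : Set.BijOn ψ T D
  subset : D ⊆ S
  val_sub_le : ∀ t ∈ T, ∀ w ∈ S \ D, (ψ t - t).val ≤ (w - t).val

lemma collapseStep_eq_insert {S D : Set (ZMod N)} (hne : (S \ D).Nonempty) (a : ZMod N) :
    ∃ k < N, a + (k : ZMod N) ∈ S \ D ∧ (∀ w ∈ S \ D, k ≤ (w - a).val) ∧
      collapseStep N S D a = insert (a + k) D := by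
  classical
  obtain ⟨y, hy⟩ := hne
  have h : ∃ k : ℕ, a + (k : ZMod N) ∈ S \ D :=
    ⟨(y - a).val, by rwa [natCast_zmod_val, add_sub_cancel]⟩
  have hle : ∀ w ∈ S \ D, Nat.find h ≤ (w - a).val :=
    fun w hw ↦ Nat.find_min' h (by rwa [natCast_zmod_val, add_sub_cancel])
  refine ⟨Nat.find h, (hle y hy).trans_lt (val_lt _), Nat.find_spec h, hle, ?_⟩
  rw [collapseStep, dif_pos h]

lemma IsGreedyMatching.exists_collapseStep {S T D : Set (ZMod N)} {ψ : ZMod N → ZMod N}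
    (hψ : IsGreedyMatching S T D ψ) (hne : (S \ D).Nonempty) {a : ZMod N} (ha : a ∉ T) :
    ∃ ψ', IsGreedyMatching S (insert a T) (collapseStep N S D a) ψ' := by
  obtain ⟨k, hkN, hk, hmin, heq⟩ := collapseStep_eq_insert hne a
  have hEq : Set.EqOn (Function.update ψ a (a + k)) ψ T :=
    fun t ht ↦ Function.update_of_ne (ne_of_mem_of_not_mem ht ha) _ _
  have hbij : Set.BijOn (Function.update ψ a (a + k)) T D := (hψ.bijOn).congr hEq.symm
  refine ⟨Function.update ψ a (a + k), ⟨?_, ?_, ?_⟩⟩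
  · have := hbij.insert (a := a) (by rw [Function.update_self]; exact hk.2)
    rwa [Function.update_self, ← heq] at this
  · rw [heq]
    exact Set.insert_subset hk.1 hψ.subset
  · have hfree : S \ collapseStep N S D a ⊆ S \ D := by
      rw [heq]
      exact Set.sdiff_subset_sdiff_right (Set.subset_insert _ _)
    rintro t (rfl | ht) w hw
    · rw [Function.update_self, add_sub_cancel_left, val_natCast_of_lt hkN]
      exact hmin w (hfree hw)
    · rw [hEq ht]
      exact hψ.val_sub_le t ht w (hfree hw)

lemma IsGreedyMatching.foldl_collapseStep {S : Set (ZMod N)} (l : List (ZMod N)) (hl : l.Nodup)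
    {T D : Set (ZMod N)} {ψ : ZMod N → ZMod N} (hψ : IsGreedyMatching S T D ψ)
    (hT : ∀ x ∈ l, x ∉ T) (hcard : T.ncard + l.length ≤ S.ncard) :
    ∃ ψ', IsGreedyMatching S (T ∪ {x | x ∈ l}) (l.foldl (collapseStep N S) D) ψ' := by
  induction l generalizing T D ψ with
  | nil => exact ⟨ψ, by simpa using hψ⟩
  | cons a l ih =>
    rw [List.nodup_cons] at hl
    have haT : a ∉ T := hT a List.mem_cons_self
    have hne : (S \ D).Nonempty := by
      rw [Set.sdiff_nonempty]
      intro hSD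
      have hST := Set.ncard_le_ncard hSD
      rw [← hψ.bijOn.ncard_eq] at hST
      rw [List.length_cons] at hcard
      omega
    obtain ⟨ψ', hψ'⟩ := hψ.exists_collapseStep hne haT
    have hlT : ∀ x ∈ l, x ∉ insert a T := by
      rintro x hx (rfl | hxT)
      exacts [hl.1 hx, hT x (List.mem_cons_of_mem a hx) hxT]
    have hcard' : (insert a T).ncard + l.length ≤ S.ncard := by
      rw [Set.ncard_insert_of_notMem haT]
      rw [List.length_cons] at hcard
      omega
    obtain ⟨ψ'', hψ''⟩ := ih hl.2 hψ' hlT hcard'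
    have hTl : T ∪ {x | x ∈ a :: l} = insert a T ∪ {x | x ∈ l} := by
      ext x
      simp only [Set.mem_union, Set.mem_insert_iff, Set.mem_ofPred_eq, List.mem_cons]
      tauto
    exact ⟨ψ'', by rwa [hTl, List.foldl_cons]⟩

lemma IsGreedyMatching.exists_ncard_le {S A D : Set (ZMod N)} {ψ : ZMod N → ZMod N}
    (hψ : IsGreedyMatching S A D ψ) {j : ZMod N} (hj : j ∈ D) :
    ∃ i, (S ∩ cycIcc N i j).ncard ≤ (A ∩ cycIcc N i j).ncard := by
  suffices h : ∃ i, S ∩ cycIcc N i j ⊆ ψ '' (A ∩ cycIcc N i j) by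
    obtain ⟨i, hi⟩ := h
    exact ⟨i, (Set.ncard_le_ncard hi).trans (Set.ncard_image_le (Set.toFinite _))⟩
  rcases (S \ D).eq_empty_or_nonempty with hfull | hne
  · refine ⟨j - (N - 1 : ℕ), fun s hs ↦ ?_⟩
    have hall : ∀ x, x ∈ cycIcc N (j - (N - 1 : ℕ)) j := fun x ↦
      (mem_cycIcc_sub_natCast_iff (Nat.sub_lt (NeZero.pos N) one_pos)).2 (by
        have := val_lt (j - x); omega)
    obtain ⟨t, ht, rfl⟩ := hψ.bijOn.image_eq ▸ Set.sdiff_eq_empty.1 hfull hs.1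
    exact ⟨t, ⟨ht, hall t⟩, rfl⟩
  obtain ⟨w, hw, hwmin⟩ := Set.exists_min_image _ (fun w ↦ (j - w).val) (Set.toFinite _) hne
  have hwj : 0 < (j - w).val := by
    rw [Nat.pos_iff_ne_zero, Ne, val_eq_zero, sub_eq_zero]
    rintro rfl
    exact hw.2 hj
  have hmem : ∀ x, x ∈ cycIcc N (j - ((j - w).val - 1 : ℕ)) j ↔ (j - x).val < (j - w).val :=
    fun x ↦ (mem_cycIcc_sub_natCast_iff (by have := val_lt (j - w); omega)).trans (by omega)
  refine ⟨j - ((j - w).val - 1 : ℕ), fun s ⟨hsS, hsI⟩ ↦ ?_⟩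
  rw [hmem] at hsI
  have hsD : s ∈ D := by
    by_contra hsD
    exact (hwmin s ⟨hsS, hsD⟩).not_gt hsI
  obtain ⟨t, ht, rfl⟩ := hψ.bijOn.image_eq ▸ hsD
  exact ⟨t, ⟨ht, (hmem t).2 (val_sub_lt_of_val_sub_le hsI (hψ.val_sub_le t ht w hw))⟩, rfl⟩

lemma IsGreedyMatching.ncard_lt {S A D : Set (ZMod N)} {ψ : ZMod N → ZMod N}
    (hψ : IsGreedyMatching S A D ψ) {j : ZMod N} (hjS : j ∈ S) (hjD : j ∉ D) (i : ZMod N) :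
    (A ∩ cycIcc N i j).ncard < (S ∩ cycIcc N i j).ncard := by
  refine lt_of_le_of_lt (Set.ncard_le_ncard_of_injOn ψ ?_ (hψ.bijOn.injOn.mono
    Set.inter_subset_left)) (Set.ncard_sdiff_singleton_lt_of_mem ⟨hjS, mem_cycIcc_iff.2 le_rfl⟩)
  rintro t ⟨ht, htI⟩
  have hψt := hψ.bijOn.mapsTo ht
  refine ⟨⟨hψ.subset hψt, cycIcc_subset_cycIcc htI ?_⟩, fun h ↦ hjD (h ▸ hψt)⟩
  exact mem_cycIcc_iff.2 (hψ.val_sub_le t ht j ⟨hjS, hjD⟩)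

end GreedyMatching

/-- for the cyclic collapse construction on `ℤ_N` with `|A| ≤ |S|`, the set
`D` of filled spaces does not depend on the order in which the elements of `A` are
processed: for any enumeration `l` of `A`, `j` is filled iff `j ∈ S` and there is a cyclic
interval `[i,j]` with `|A ∩ [i,j]| ≥ |S ∩ [i,j]|`. -/
theorem stmt_5 (N : ℕ) [NeZero N] (A S : Set (ZMod N)) (hAS : A.ncard ≤ S.ncard)
    (l : List (ZMod N)) (hnd : l.Nodup) (hl : ∀ x, x ∈ l ↔ x ∈ A) :
    ∀ j : ZMod N,
      j ∈ l.foldl (collapseStep N S) ∅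
        ↔ (j ∈ S ∧ ∃ i : ZMod N,
            (S ∩ cycIcc N i j).ncard ≤ (A ∩ cycIcc N i j).ncard) := by
  classical
  have hA : {x | x ∈ l} = A := Set.ext hl
  have hlen : l.length = A.ncard := by
    rw [← hA, ← List.coe_toFinset, Set.ncard_coe_finset, List.toFinset_card_of_nodup hnd]
  have hempty : IsGreedyMatching S ∅ ∅ id := ⟨Set.bijOn_empty id, Set.empty_subset S, by simp⟩
  obtain ⟨ψ, hψ⟩ := hempty.foldl_collapseStep l hnd (fun _ _ ↦ Set.notMem_empty _)
    (by rw [Set.ncard_empty, zero_add, hlen]; exact hAS)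
  rw [Set.empty_union, hA] at hψ
  intro j
  refine ⟨fun hj ↦ ⟨hψ.subset hj, hψ.exists_ncard_le hj⟩, fun ⟨hjS, i, hi⟩ ↦ ?_⟩
  by_contra hjD
  exact (hψ.ncard_lt hjS hjD i).not_ge hi
end

section
/- Define the multiline forward map T on X̃ × {1,…,N}, where X̃ is the set of n-line particle configurations on ℤ_N with fixed particle counts (q_1,…,q_n) per line, by T(x,i) = (Y(x,i), b_0(x,i)), where b_n = i, b_m = b_{m+1} if x_{m+1}(b_{m+1}) = 1 and b_m = b_{m+1}+1 otherwise, and Y(x,i) swaps the values at sites b_m−1, b_m on line m to put the minimum first. Then T is a bijection from X̃ × {1,…,N} to itself. -/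
/-- TASEP swap at `(p-1, p)` for a one-line `{particle, hole}` configuration
(`true` = particle = value 1, `false` = hole = value ∞): the minimum (a particle, if one is
present) is put at `p-1` and the maximum at `p`. -/
def swapAt {N : ℕ} (u : ZMod N → Bool) (p : ZMod N) : ZMod N → Bool :=
  fun j => if j = p - 1 then u (p - 1) || u p
           else if j = p then u (p - 1) && u p
           else u j

/-- The bell cascade of the multiline process: `bells x i k` is the position `b_{n-k}` of
the bell on line `n-k` (lines `1,…,n` are indexed by `Fin n`, line `m` being index `m-1`).
`b_n = i`, and `b_m = b_{m+1}` if line `m+1` has a particle at `b_{m+1}`, else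
`b_m = b_{m+1} + 1`. -/
def bells {N n : ℕ} (x : Fin n → ZMod N → Bool) (i : ZMod N) : ℕ → ZMod N
  | 0 => i
  | k + 1 =>
      let p := bells x i k
      if h : n - 1 - k < n then (if x ⟨n - 1 - k, h⟩ p then p else p + 1) else p

/-- The forward jump `Y(x,i)`: on each line `m` (index `t = m-1`), swap at
`(b_m - 1, b_m)`, where `b_m = bells x i (n - m)`. -/
def Ymap {N n : ℕ} (x : Fin n → ZMod N → Bool) (i : ZMod N) : Fin n → ZMod N → Bool :=
  fun t => swapAt (x t) (bells x i (n - 1 - (t : ℕ)))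

/-- The forward one-step bell update on a single line. -/
def fwdBell {N : ℕ} (u : ZMod N → Bool) (p : ZMod N) : ZMod N :=
  if u p then p else p + 1

/-- Recover the bell position on a line from the post-jump configuration `v` and the bell
position `j` on the line below. -/
def bellBack {N : ℕ} (v : ZMod N → Bool) (j : ZMod N) : ZMod N :=
  if v (j - 1) then j else j - 1

/-- Undo the swap on a single line, given the post-jump line `v` and the bell position `j`
on the line below. -/
def unswapAt {N : ℕ} (v : ZMod N → Bool) (j : ZMod N) : ZMod N → Bool :=
  fun k => if k = bellBack v j - 1 then (if v (j - 1) then v (bellBack v j) else v (bellBack v j - 1))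
           else if k = bellBack v j then v (j - 1) else v k

lemma bellBack_swap {N : ℕ} (u : ZMod N → Bool) (p : ZMod N) :
    bellBack (swapAt u p) (fwdBell u p) = p := by
  by_cases hp : u p
  · simp [bellBack, fwdBell, swapAt, hp]
  · by_cases h1 : p = p - 1
    · simp [bellBack, fwdBell, swapAt, hp, add_sub_cancel_right, ← h1]
    · simp [bellBack, fwdBell, swapAt, hp, add_sub_cancel_right, h1]

lemma unswap_swap {N : ℕ} (u : ZMod N → Bool) (p : ZMod N) :
    unswapAt (swapAt u p) (fwdBell u p) = u := by
  funext k
  rw [unswapAt, bellBack_swap]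
  by_cases hp : u p
  · have hj : fwdBell u p - 1 = p - 1 := by simp [fwdBell, hp]
    by_cases hk1 : k = p - 1
    · by_cases h1 : p = p - 1
      · simp [hj, swapAt, hp, hk1, ← h1]
      · simp [hj, swapAt, hp, hk1, h1]
    · by_cases hk2 : k = p
      · simp [hj, swapAt, hp, hk1, hk2]
        exact Or.inl (fun h => hk1 (hk2.trans h))
      · simp [hj, swapAt, hp, hk1, hk2]
  · have hj : fwdBell u p - 1 = p := by simp [fwdBell, hp, add_sub_cancel_right]
    by_cases hk1 : k = p - 1
    · by_cases h1 : p = p - 1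
      · simp [hj, swapAt, hp, hk1, ← h1]
      · simp [hj, swapAt, hp, hk1, h1]
    · by_cases hk2 : k = p
      · by_cases h1 : p = p - 1
        · simp [hj, swapAt, hp, hk1, hk2, ← h1] at *
        · simp [hj, swapAt, hp, hk1, hk2, h1]
      · simp [hj, swapAt, hp, hk1, hk2]

/-- The inverse bell cascade: recover `b_0, b_1, …, b_n` from the post-jump configuration
and `b_0`. -/
def cells {N n : ℕ} (y : Fin n → ZMod N → Bool) (j : ZMod N) : ℕ → ZMod N
  | 0 => j
  | k + 1 =>
      let b := cells y j k
      if h : k < n then bellBack (y ⟨k, h⟩) b else b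

lemma bells_succ {N n : ℕ} (x : Fin n → ZMod N → Bool) (i : ZMod N) (k : ℕ) (hk : k < n) :
    bells x i (n - k) = fwdBell (x ⟨k, hk⟩) (bells x i (n - 1 - k)) := by
  have h1 : n - k = (n - 1 - k) + 1 := by omega
  rw [h1, bells]
  have h2 : n - 1 - (n - 1 - k) < n := by omega
  have h3 : n - 1 - (n - 1 - k) = k := by omega
  have he : (⟨n - 1 - (n - 1 - k), h2⟩ : Fin n) = ⟨k, hk⟩ := Fin.mk_eq_mk.mpr h3
  simp only [dif_pos h2, fwdBell, he]

lemma cells_bells {N n : ℕ} (x : Fin n → ZMod N → Bool) (i : ZMod N) (k : ℕ) (hk : k ≤ n) :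
    cells (Ymap x i) (bells x i n) k = bells x i (n - k) := by
  induction k with
  | zero => simp [cells]
  | succ k ih =>
      have hk' : k < n := hk
      rw [cells]
      simp only [dif_pos hk', ih (le_of_lt hk')]
      have : (Ymap x i) ⟨k, hk'⟩ = swapAt (x ⟨k, hk'⟩) (bells x i (n - 1 - k)) := rfl
      rw [this, bells_succ x i k hk', bellBack_swap]
      congr 1
      omega

lemma Tinv_T {N n : ℕ} (x : Fin n → ZMod N → Bool) (i : ZMod N) :
    (fun t : Fin n => unswapAt (Ymap x i t) (cells (Ymap x i) (bells x i n) t)) = x ∧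
      cells (Ymap x i) (bells x i n) n = i := by
  constructor
  · funext t
    have ht : (t : ℕ) ≤ n := le_of_lt t.isLt
    rw [cells_bells x i t ht, bells_succ x i t t.isLt]
    show unswapAt (swapAt (x t) (bells x i (n - 1 - t))) _ = x t
    have : (⟨(t : ℕ), t.isLt⟩ : Fin n) = t := Fin.eta t t.isLt
    rw [this, unswap_swap]
  · rw [cells_bells x i n le_rfl]
    simp [bells]

lemma card_swapAt {N : ℕ} [NeZero N] (u : ZMod N → Bool) (p : ZMod N) :
    (Finset.univ.filter (fun i => swapAt u p i = true)).card
      = (Finset.univ.filter (fun i => u i = true)).card := by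
  by_cases h1 : u (p - 1)
  · have : swapAt u p = u := by
      funext k
      by_cases hk1 : k = p - 1
      · simp [swapAt, hk1, h1]
      · by_cases hk2 : k = p
        · simp [swapAt, hk1, hk2, h1]
          exact fun h => absurd (hk2.trans h) hk1
        · simp [swapAt, hk1, hk2]
    rw [this]
  · have : swapAt u p = fun k => u (Equiv.swap (p - 1) p k) := by
      funext k
      by_cases hk1 : k = p - 1
      · simp [swapAt, hk1, h1, Equiv.swap_apply_left]
      · by_cases hk2 : k = p
        · simp [swapAt, hk1, hk2, h1, Equiv.swap_apply_right]
          exact fun h => absurd (hk2.trans h) hk1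
        · simp [swapAt, hk1, hk2, Equiv.swap_apply_of_ne_of_ne hk1 hk2]
    rw [this]
    apply Finset.card_bij' (fun a _ => Equiv.swap (p-1) p a) (fun a _ => Equiv.swap (p-1) p a)
    · intro a ha; simpa using ha
    · intro a ha; simpa using ha
    · intro a _; simp
    · intro a _; simp

open Classical in
/-- the map `T(x,i) = (Y(x,i), b_0(x,i))` is a bijection from `X̃ × ℤ_N` to
itself, where `X̃` is the set of `n`-line configurations on `ℤ_N` with exactly `q m`
particles on line `m`. -/
theorem stmt_6 (N n : ℕ) [NeZero N] (q : Fin n → ℕ) :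
    Set.BijOn
      (fun p : (Fin n → ZMod N → Bool) × ZMod N => (Ymap p.1 p.2, bells p.1 p.2 n))
      ({x : Fin n → ZMod N → Bool |
          ∀ m : Fin n, (Finset.univ.filter (fun i => x m i = true)).card = q m} ×ˢ
        (Set.univ : Set (ZMod N)))
      ({x : Fin n → ZMod N → Bool |
          ∀ m : Fin n, (Finset.univ.filter (fun i => x m i = true)).card = q m} ×ˢ
        (Set.univ : Set (ZMod N))) := by
  set S := ({x : Fin n → ZMod N → Bool |
          ∀ m : Fin n, (Finset.univ.filter (fun i => x m i = true)).card = q m} ×ˢ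
        (Set.univ : Set (ZMod N)))
  have hmaps : Set.MapsTo
      (fun p : (Fin n → ZMod N → Bool) × ZMod N => (Ymap p.1 p.2, bells p.1 p.2 n)) S S := by
    rintro ⟨x, i⟩ ⟨hx, -⟩
    refine ⟨fun m => ?_, Set.mem_univ _⟩
    show (Finset.univ.filter (fun j => Ymap x i m j = true)).card = q m
    have : Ymap x i m = swapAt (x m) (bells x i (n - 1 - (m : ℕ))) := rfl
    rw [this, card_swapAt]
    exact hx m
  have hinj : Set.InjOn
      (fun p : (Fin n → ZMod N → Bool) × ZMod N => (Ymap p.1 p.2, bells p.1 p.2 n)) S := by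
    rintro ⟨x, i⟩ - ⟨x', i'⟩ - h
    have h1 : Ymap x i = Ymap x' i' := congrArg Prod.fst h
    have h2 : bells x i n = bells x' i' n := congrArg Prod.snd h
    obtain ⟨ha, hb⟩ := Tinv_T x i
    obtain ⟨ha', hb'⟩ := Tinv_T x' i'
    rw [h1, h2] at ha hb
    exact Prod.ext (ha.symm.trans ha') (hb.symm.trans hb')
  exact ((Set.toFinite S).injOn_iff_bijOn_of_mapsTo hmaps).mp hinj
end

section
/- With T(x,i) = (Y(x,i), b_0(x,i)) the forward multiline map and T*(y,j) = (X(y,j), c_{n+1}(y,j)) the reverse multiline map (where c_1 = j, c_{m+1} = c_m if y_m(c_m−1) = 1 and c_{m+1} = c_m−1 otherwise, and X(y,j) swaps values at c_m−1, c_m on line m to put the maximum first), one has T*(T(x,i)) = (x,i) for every configuration x in X̃ and every i ∈ ℤ_N. -/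
/-- Reverse swap at `(p-1,p)`: maximum (hole, `false`) first. -/
def rswapAt {N : ℕ} (u : ZMod N → Bool) (p : ZMod N) : ZMod N → Bool :=
  fun j => if j = p - 1 then u (p - 1) && u p
           else if j = p then u (p - 1) || u p
           else u j

/-- Reverse bell cascade: `rbells y j k = c_{k+1}`; `c_1 = j`, and
`c_{m+1} = c_m` if `y_m(c_m - 1)` is a particle, else `c_m - 1`. -/
def rbells {N n : ℕ} (y : Fin n → ZMod N → Bool) (j : ZMod N) : ℕ → ZMod N
  | 0 => j
  | k + 1 =>
      let p := rbells y j k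
      if h : k < n then (if y ⟨k, h⟩ (p - 1) then p else p - 1) else p

/-- Reverse jump `X(y,j)`: swap (maximum first) at `(c_m - 1, c_m)` on line `m`. -/
def Xmap {N n : ℕ} (y : Fin n → ZMod N → Bool) (j : ZMod N) : Fin n → ZMod N → Bool :=
  fun t => rswapAt (y t) (rbells y j (t : ℕ))

lemma swapAt_sub {N : ℕ} (u : ZMod N → Bool) (p : ZMod N) :
    swapAt u p (p - 1) = (u (p - 1) || u p) := by simp [swapAt]

lemma swapAt_at {N : ℕ} (u : ZMod N → Bool) (p : ZMod N) (hp : p ≠ p - 1) :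
    swapAt u p p = (u (p - 1) && u p) := by simp [swapAt, hp]

lemma swapAt_other {N : ℕ} (u : ZMod N → Bool) (p j : ZMod N)
    (h1 : j ≠ p - 1) (h2 : j ≠ p) : swapAt u p j = u j := by simp [swapAt, h1, h2]

lemma rswapAt_sub {N : ℕ} (u : ZMod N → Bool) (p : ZMod N) :
    rswapAt u p (p - 1) = (u (p - 1) && u p) := by simp [rswapAt]

lemma rswapAt_at {N : ℕ} (u : ZMod N → Bool) (p : ZMod N) (hp : p ≠ p - 1) :
    rswapAt u p p = (u (p - 1) || u p) := by simp [rswapAt, hp]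

lemma rswapAt_other {N : ℕ} (u : ZMod N → Bool) (p j : ZMod N)
    (h1 : j ≠ p - 1) (h2 : j ≠ p) : rswapAt u p j = u j := by simp [rswapAt, h1, h2]

lemma swap_inv {N : ℕ} (u : ZMod N → Bool) (p : ZMod N) :
    rswapAt (swapAt u p) (if u p then p else p + 1) = u := by
  set v := swapAt u p with hv
  by_cases hp : p = p - 1
  · -- degenerate collapse (p - 1 = p, hence p + 1 = p)
    have h1 : p + 1 = p := by nth_rewrite 1 [hp]; ring
    have hveq : v = u := by
      funext j
      by_cases hj : j = p
      · rw [hj, hv]; simp [swapAt, ← hp]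
      · rw [hv, swapAt_other u p j (by rw [← hp]; exact hj) hj]
    have hc : (if u p then p else p + 1) = p := by rw [h1, ite_self]
    rw [hc, hveq]
    funext j
    by_cases hj : j = p
    · rw [hj]; simp [rswapAt, ← hp]
    · exact rswapAt_other u p j (by rw [← hp]; exact hj) hj
  · have hc1 : p + 1 - 1 = p := by ring
    cases h : u p
    · -- c = p + 1
      rw [if_neg (by simp [h])]
      funext j
      have hvp : v p = false := by rw [hv, swapAt_at u p hp, h, Bool.and_false]
      have hne : p + 1 ≠ p + 1 - 1 := by
        rw [hc1]; intro e
        have h2 := congrArg (fun z => z - 1) e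
        simp only [hc1] at h2
        exact hp h2
      by_cases hj1 : j = p
      · rw [hj1]
        have e := rswapAt_sub v (p + 1)
        rw [hc1] at e
        rw [e, hvp, Bool.false_and, h]
      · by_cases hj2 : j = p + 1
        · rw [hj2]
          have e := rswapAt_at v (p + 1) hne
          rw [hc1] at e
          rw [e, hvp, Bool.false_or, hv]
          by_cases hq : p + 1 = p - 1
          · rw [hq, swapAt_sub, h, Bool.or_false, ← hq]
          · exact swapAt_other u p (p + 1) hq (by rw [← hj2]; exact hj1)
        · have e := rswapAt_other v (p + 1) j (by rw [hc1]; exact hj1) hj2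
          rw [e, hv]
          by_cases hj3 : j = p - 1
          · rw [hj3, swapAt_sub, h, Bool.or_false, ← hj3]
          · exact swapAt_other u p j hj3 hj1
    · -- c = p
      rw [if_pos (by simp [h])]
      funext j
      have hvs : v (p - 1) = true := by rw [hv, swapAt_sub, h, Bool.or_true]
      by_cases hj1 : j = p - 1
      · rw [hj1, rswapAt_sub, hvs, Bool.true_and, hv, swapAt_at u p hp, h, Bool.and_true]
      · by_cases hj2 : j = p
        · rw [hj2, rswapAt_at v p hp, hvs, Bool.true_or, h]
        · rw [rswapAt_other v p j hj1 hj2, hv, swapAt_other u p j hj1 hj2]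

lemma swap_point {N : ℕ} (u : ZMod N → Bool) (p : ZMod N) :
    swapAt u p ((if u p then p else p + 1) - 1) = u p := by
  cases h : u p
  · rw [if_neg (by simp [h])]
    have hc1 : p + 1 - 1 = p := by ring
    rw [hc1]
    by_cases hp : p = p - 1
    · simp [swapAt, ← hp, h]
    · rw [swapAt_at u p hp, h, Bool.and_false]
  · rw [if_pos (by simp [h]), swapAt_sub, h, Bool.or_true]

lemma bells_step {N n : ℕ} (x : Fin n → ZMod N → Bool) (i : ZMod N) (k : ℕ) (hk : k < n) :
    bells x i (n - k) =
      (if x ⟨k, hk⟩ (bells x i (n - (k + 1))) then bells x i (n - (k + 1))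
       else bells x i (n - (k + 1)) + 1) := by
  have e : n - k = (n - (k + 1)) + 1 := by omega
  have h3 : n - 1 - (n - (k + 1)) < n := by omega
  have h2 : (⟨n - 1 - (n - (k + 1)), h3⟩ : Fin n) = ⟨k, hk⟩ := by
    apply Fin.ext; simp; omega
  rw [e, bells, dif_pos h3, h2]

lemma rbells_eq {N n : ℕ} (x : Fin n → ZMod N → Bool) (i : ZMod N) :
    ∀ k, k ≤ n → rbells (Ymap x i) (bells x i n) k = bells x i (n - k)
  | 0, _ => by simp [rbells]
  | k + 1, hk => by
    have hk' : k < n := hk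
    have ih := rbells_eq x i k (le_of_lt hk')
    rw [rbells, dif_pos hk']
    set u := x ⟨k, hk'⟩ with hu
    set p := bells x i (n - (k + 1)) with hp
    have hb : bells x i (n - k) = if u p then p else p + 1 := bells_step x i k hk'
    have harg : n - 1 - ((⟨k, hk'⟩ : Fin n) : ℕ) = n - (k + 1) := by simp; omega
    have hy : Ymap x i ⟨k, hk'⟩ = swapAt u p := by
      simp only [Ymap, harg, ← hp, ← hu]
    simp only [ih, hb, hy, swap_point]
    cases hxp : u p <;> simp

/-- `T*(T(x,i)) = (x,i)` for every `x ∈ X̃` and every `i ∈ ℤ_N`, where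
`T(x,i) = (Y(x,i), b_0(x,i))` and `T*(y,j) = (X(y,j), c_{n+1}(y,j))`. -/
theorem stmt_7 (N n : ℕ) [NeZero N] (q : Fin n → ℕ)
    (x : Fin n → ZMod N → Bool)
    (hx : ∀ m : Fin n, (Finset.univ.filter (fun i => x m i = true)).card = q m)
    (i : ZMod N) :
    Xmap (Ymap x i) (bells x i n) = x ∧ rbells (Ymap x i) (bells x i n) n = i := by
  constructor
  · funext t
    have ht : (t : ℕ) < n := t.isLt
    have hr : rbells (Ymap x i) (bells x i n) (t : ℕ) = bells x i (n - (t : ℕ)) :=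
      rbells_eq x i (t : ℕ) (le_of_lt ht)
    have hb := bells_step x i (t : ℕ) ht
    have hteta : (⟨(t : ℕ), ht⟩ : Fin n) = t := by ext; rfl
    have harg : n - 1 - (t : ℕ) = n - ((t : ℕ) + 1) := by omega
    show rswapAt (Ymap x i t) (rbells (Ymap x i) (bells x i n) (t : ℕ)) = x t
    rw [hr, hb, hteta]
    simp only [Ymap, harg]
    exact swap_inv (x t) _
  · have h := rbells_eq x i n le_rfl
    rw [Nat.sub_self] at h
    simpa [bells] using h
end

section
/- Let F be the multiclass queueing operator taking an arrival process a with values in {1,…,m,∞} and service process s with values in {1,∞} to the departure process d with values in {1,…,m+1,∞}, defined via queue-lengths Q_j^{≤k} = sup_{i≤j} [#{r∈[i,j]: a(r)≤k} − #{r∈[i,j]: s(r)=1}]_+ and the rule: d(j) = ∞ iff s(j) = ∞; if s(j)=1 then d(j) ≤ k iff (Q_{j−1}^{≤k} > 0 or a(j) ≤ k), for k ≤ m, and d(j) = m+1 if s(j)=1, Q_{j−1}^{≤m}=0 and a(j)=∞. If s(i) = ∞, and b = i+1, then F(a^{(b−1,b)}, s^{(i−1,i)}) = F(a,s)^{(i−1,i)}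 = F(a,s). -/
open scoped Classical

/-!
When `s i = ∞` nothing is served at `i`, so Lindley's recursion
`Q_j = max(0, Q_{j-1} + [a j ≤ k] - [s j = 1])` for the queue lengths `Q^{≤k}` involves no
truncation at `i`. Sorting the arrivals at `i, i+1` therefore changes only `Q_i`: the load
`Q_{j-1} + [a j ≤ k]` met by every server `j ≠ i` is unchanged, because at `j = i+1` both loads
are `Q_{i-1}` plus the number of class-`≤ k` arrivals at `{i, i+1}`. The departures at `j ≠ i`
are determined by these loads, and `d i = ∞` makes the swap of `d` at `(i-1, i)` trivial.
-/

/-- `QLen a s k j v`: `v` is the queue-length `Q_j^{≤k}`, i.e. the (finite, attained)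
supremum over `i ≤ j` of `[#{r∈[i,j] : a(r) ≤ k} − #{r∈[i,j] : s(r)=1}]_+`. -/
def QLen (a s : ℤ → ℕ∞) (k : ℕ) (j : ℤ) (v : ℤ) : Prop :=
  IsGreatest
    {w : ℤ | ∃ i ≤ j, w = max 0
      (({r : ℤ | r ∈ Set.Icc i j ∧ a r ≤ (k : ℕ∞)}.ncard : ℤ)
        - ({r : ℤ | r ∈ Set.Icc i j ∧ s r = 1}.ncard : ℤ))} v

/-- `isOutput m a s d`: `d` is the departure process `F_m(a,s)` of the multiclass
priority queue with arrival process `a` (classes `1,…,m` and holes `∞`) and service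
process `s` (values `1` and `∞`): all queue-lengths `Q_j^{≤k}` are finite, `d(j) = ∞`
iff `s(j) = ∞`; for `1 ≤ k ≤ m`, `d(j) ≤ k` iff `s(j)=1` and (`Q_{j−1}^{≤k} > 0` or
`a(j) ≤ k`); `d(j) = m+1` when `s(j)=1`, `Q_{j−1}^{≤m} = 0` and `a(j) = ∞`; and `d`
takes values in `{1,…,m+1,∞}`. -/
def isOutput (m : ℕ) (a s d : ℤ → ℕ∞) : Prop :=
  ∃ Q : ℤ → ℕ → ℤ,
    (∀ (j : ℤ) (k : ℕ), QLen a s k j (Q j k)) ∧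
    ∀ j : ℤ,
      (d j = ⊤ ↔ s j = ⊤) ∧
      (∀ k : ℕ, 1 ≤ k → k ≤ m →
        (d j ≤ (k : ℕ∞) ↔ s j = 1 ∧ (0 < Q (j - 1) k ∨ a j ≤ (k : ℕ∞)))) ∧
      (s j = 1 ∧ Q (j - 1) m = 0 ∧ a j = ⊤ → d j = ((m + 1 : ℕ) : ℕ∞)) ∧
      (d j = ⊤ ∨ ((1 : ℕ∞) ≤ d j ∧ d j ≤ ((m + 1 : ℕ) : ℕ∞)))

/-- The TASEP swap `u^{(i−1,i)}`: put `min(u(i−1),u(i))` at `i−1` and the max at `i`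
(`∞ = ⊤` is larger than every integer). -/
noncomputable def swapPair (u : ℤ → ℕ∞) (i : ℤ) : ℤ → ℕ∞ :=
  fun j => if j = i - 1 then min (u (i - 1)) (u i)
           else if j = i then max (u (i - 1)) (u i)
           else u j

noncomputable def netLoad (a s : ℤ → ℕ∞) (k : ℕ) (i j : ℤ) : ℤ :=
  ((Finset.Icc i j).filter (fun r => a r ≤ k)).card
    - ((Finset.Icc i j).filter (fun r => s r = 1)).card

theorem netLoad_of_lt {a s : ℤ → ℕ∞} {k : ℕ} {i j : ℤ} (h : j < i) :
    netLoad a s k i j = 0 := by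
  simp [netLoad, Finset.Icc_eq_empty_of_lt h]

theorem netLoad_add_one {a s : ℤ → ℕ∞} {k : ℕ} {i j : ℤ} (h : i ≤ j + 1) :
    netLoad a s k i (j + 1) = netLoad a s k i j
      + ((if a (j + 1) ≤ k then 1 else 0) - if s (j + 1) = 1 then 1 else 0) := by
  have hj : j + 1 ∉ Finset.Icc i j := by simp
  simp only [netLoad, ← Finset.insert_Icc_right_eq_Icc_add_one h, Finset.filter_insert]
  split_ifs <;> simp [Finset.card_insert_of_notMem, hj] <;> ring

theorem ite_min_le_add_ite_max_le {α : Type*} [LinearOrder α] (x y c : α) :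
    ((if min x y ≤ c then 1 else 0) + if max x y ≤ c then 1 else 0 : ℤ)
      = (if x ≤ c then 1 else 0) + if y ≤ c then 1 else 0 := by
  rcases le_total x y with h | h
  · rw [min_eq_left h, max_eq_right h]
  · rw [min_eq_right h, max_eq_left h, add_comm]

theorem pos_or_iff_pos_add_ite {v : ℤ} (hv : 0 ≤ v) (p : Prop) [Decidable p] :
    (0 < v ∨ p) ↔ 0 < v + if p then 1 else 0 := by
  split_ifs with hp <;> simp only [hp, or_true, or_false, true_iff, add_zero]
  omega

theorem ENat.eq_of_forall_le_natCast_iff {m : ℕ} {x y : ℕ∞}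
    (hx : 1 ≤ x ∧ x ≤ ((m + 1 : ℕ) : ℕ∞)) (hy : 1 ≤ y ∧ y ≤ ((m + 1 : ℕ) : ℕ∞))
    (h : ∀ k : ℕ, 1 ≤ k → k ≤ m → (x ≤ k ↔ y ≤ k)) : x = y := by
  lift x to ℕ using ne_top_of_le_ne_top (ENat.natCast_ne_top _) hx.2
  lift y to ℕ using ne_top_of_le_ne_top (ENat.natCast_ne_top _) hy.2
  simp only [Nat.one_le_cast, Nat.cast_le] at hx hy h
  have := h x
  have := h y
  norm_cast
  omega

namespace QLen

variable {a s : ℤ → ℕ∞} {k : ℕ} {j v w : ℤ}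

theorem iff_isGreatest_netLoad :
    QLen a s k j v ↔ IsGreatest {w | ∃ i ≤ j, w = max 0 (netLoad a s k i j)} v := by
  have hcard : ∀ (i : ℤ) (P : ℤ → Prop) [DecidablePred P],
      {r | r ∈ Set.Icc i j ∧ P r}.ncard = ((Finset.Icc i j).filter P).card := by
    intro i P _
    rw [← Set.ncard_coe_finset]
    congr 1
    ext r
    simp
  simp only [QLen, netLoad, hcard]

theorem unique (hv : QLen a s k j v) (hw : QLen a s k j w) : v = w :=
  IsGreatest.unique hv hw

theorem nonneg (h : QLen a s k j v) : 0 ≤ v := by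
  obtain ⟨⟨i, -, rfl⟩, -⟩ := iff_isGreatest_netLoad.1 h
  exact le_max_left _ _

theorem congr_arrivals {a' : ℤ → ℕ∞} (h : ∀ r ≤ j, a' r = a r) :
    QLen a' s k j v ↔ QLen a s k j v := by
  have hset : ∀ i,
      {r | r ∈ Set.Icc i j ∧ a' r ≤ k} = {r | r ∈ Set.Icc i j ∧ a r ≤ k} :=
    fun i => Set.ext fun r => and_congr_right fun hr => by rw [h r hr.2]
  simp only [QLen, hset]

theorem lindley (h : QLen a s k j v) :
    QLen a s k (j + 1)
      (max 0 (v + ((if a (j + 1) ≤ k then 1 else 0) - if s (j + 1) = 1 then 1 else 0))) := by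
  rw [iff_isGreatest_netLoad] at h ⊢
  obtain ⟨⟨i₀, hi₀, rfl⟩, hmax⟩ := h
  have hempty : netLoad a s k (j + 1) j = 0 := netLoad_of_lt (lt_add_one j)
  refine ⟨?_, ?_⟩
  · by_cases hX : 0 ≤ netLoad a s k i₀ j
    · refine ⟨i₀, by omega, ?_⟩
      rw [netLoad_add_one (by omega), max_eq_right hX]
    · refine ⟨j + 1, le_rfl, ?_⟩
      have hv : max 0 (netLoad a s k i₀ j) = 0 := max_eq_left (by omega)
      rw [netLoad_add_one le_rfl, hempty, hv]
  · rintro _ ⟨i, hi, rfl⟩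
    rw [netLoad_add_one hi]
    rcases hi.lt_or_eq with hi | rfl
    · have := hmax ⟨i, by omega, rfl⟩
      omega
    · rw [hempty]
      omega

end QLen

section swapPair

variable (u : ℤ → ℕ∞) (i : ℤ)

theorem swapPair_eq_self_of_top (hu : u i = ⊤) : swapPair u i = u := by
  funext j
  simp only [swapPair, hu, min_top_right, max_top_right]
  split_ifs with h₁ h₂
  · rw [h₁]
  · rw [h₂, hu]
  · rfl

theorem swapPair_add_one_apply_self : swapPair u (i + 1) i = min (u i) (u (i + 1)) := by
  simp [swapPair]

theorem swapPair_add_one_apply_add_one :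
    swapPair u (i + 1) (i + 1) = max (u i) (u (i + 1)) := by
  simp [swapPair]

theorem swapPair_add_one_apply_of_ne {r : ℤ} (h₁ : r ≠ i) (h₂ : r ≠ i + 1) :
    swapPair u (i + 1) r = u r := by
  simp [swapPair, h₁, h₂]

end swapPair

theorem QLen.lindley_eq {a s : ℤ → ℕ∞} {k : ℕ} {q : ℤ → ℤ} (hq : ∀ j, QLen a s k j (q j))
    (j : ℤ) : q (j + 1) =
      max 0 (q j + ((if a (j + 1) ≤ k then 1 else 0) - if s (j + 1) = 1 then 1 else 0)) :=
  (hq (j + 1)).unique (hq j).lindley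

theorem QLen.add_ite_swapPair_eq {a s : ℤ → ℕ∞} {k : ℕ} {i : ℤ} (hsi : s i ≠ 1)
    {q q' : ℤ → ℤ} (hq : ∀ j, QLen a s k j (q j))
    (hq' : ∀ j, QLen (swapPair a (i + 1)) s k j (q' j)) {j : ℤ} (hj : j ≠ i) :
    q' (j - 1) + (if swapPair a (i + 1) j ≤ k then 1 else 0)
      = q (j - 1) + if a j ≤ k then 1 else 0 := by
  have below : ∀ j < i, q' j = q j := fun j hj =>
    ((congr_arrivals fun r hr => swapPair_add_one_apply_of_ne a i (by omega) (by omega)).1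
      (hq' j)).unique (hq j)
  have at_succ : q' i + (if swapPair a (i + 1) (i + 1) ≤ k then 1 else 0)
      = q i + if a (i + 1) ≤ k then 1 else 0 := by
    have h := lindley_eq hq (i - 1)
    have h' := lindley_eq hq' (i - 1)
    rw [sub_add_cancel] at h h'
    rw [h, h', below (i - 1) (by omega), swapPair_add_one_apply_self,
      swapPair_add_one_apply_add_one, if_neg hsi, sub_zero, sub_zero]
    have := (hq (i - 1)).nonneg
    have := ite_min_le_add_ite_max_le (a i) (a (i + 1)) (k : ℕ∞)
    rw [max_eq_right (a := 0) (by split_ifs <;> omega),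
      max_eq_right (a := 0) (by split_ifs <;> omega)]
    omega
  have above : ∀ j, i + 1 ≤ j → q' j = q j := by
    intro j hj
    induction j, hj using Int.leInduction with
    | base =>
      rw [lindley_eq hq i, lindley_eq hq' i, ← add_sub_assoc, ← add_sub_assoc, at_succ]
    | succ j hj ih =>
      rw [lindley_eq hq j, lindley_eq hq' j, ih,
        swapPair_add_one_apply_of_ne a i (by omega) (by omega)]
  rcases lt_trichotomy j (i + 1) with h | rfl | h
  · rw [below (j - 1) (by omega), swapPair_add_one_apply_of_ne a i hj (by omega)]
  · rwa [add_sub_cancel_right]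
  · rw [above (j - 1) (by omega), swapPair_add_one_apply_of_ne a i hj (by omega)]

theorem stmt_9_general (m : ℕ) (a s d : ℤ → ℕ∞)
    (hd : isOutput m a s d)
    (i : ℤ) (hsi : s i = ⊤) :
    (∀ d' : ℤ → ℕ∞,
        isOutput m (swapPair a (i + 1)) (swapPair s i) d' → d' = swapPair d i)
    ∧ swapPair d i = d := by
  obtain ⟨Q, hQ, hd⟩ := hd
  have hdi : swapPair d i = d := swapPair_eq_self_of_top d i ((hd i).1.2 hsi)
  refine ⟨fun d' hd' => ?_, hdi⟩
  rw [swapPair_eq_self_of_top s i hsi] at hd'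
  obtain ⟨Q', hQ', hd'⟩ := hd'
  rw [hdi]
  funext j
  by_cases hsj : s j = ⊤
  · rw [(hd' j).1.2 hsj, (hd j).1.2 hsj]
  have hji : j ≠ i := by
    rintro rfl
    exact hsj hsi
  refine ENat.eq_of_forall_le_natCast_iff ((hd' j).2.2.2.resolve_left (mt (hd' j).1.1 hsj))
    ((hd j).2.2.2.resolve_left (mt (hd j).1.1 hsj)) fun k hk₁ hkm => ?_
  rw [(hd' j).2.1 k hk₁ hkm, (hd j).2.1 k hk₁ hkm,
    pos_or_iff_pos_add_ite (hQ' (j - 1) k).nonneg,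
    pos_or_iff_pos_add_ite (hQ (j - 1) k).nonneg,
    QLen.add_ite_swapPair_eq (by simp [hsi]) (fun j => hQ j k) (fun j => hQ' j k) hji]

/-- Lemma 4.3, Case 1: if `s(i) = ∞` then, with `b = i+1`,
`F_m(a^{(b−1,b)}, s^{(i−1,i)}) = F_m(a,s)^{(i−1,i)} = F_m(a,s)`. -/
theorem stmt_9 (m : ℕ) (a s d : ℤ → ℕ∞)
    (ha : ∀ j, a j = ⊤ ∨ ((1 : ℕ∞) ≤ a j ∧ a j ≤ ((m : ℕ) : ℕ∞)))
    (hs : ∀ j, s j = 1 ∨ s j = ⊤)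
    (hd : isOutput m a s d)
    (i : ℤ) (hsi : s i = ⊤) :
    (∀ d' : ℤ → ℕ∞,
        isOutput m (swapPair a (i + 1)) (swapPair s i) d' → d' = swapPair d i)
    ∧ swapPair d i = d :=
  stmt_9_general m a s d hd i hsi
end

section
/- Let F be the multiclass queueing operator as above, with arrival process a (values in {1,…,m,∞}) and service process s (values in {1,∞}), d = F(a,s). Suppose s(i−1) = ∞ and s(i) = 1, and set b = i. Then F(a^{(i−1,i)}, s^{(i−1,i)}) = d^{(i−1,i)}. -/
/-!
Swapping an unused service at `i - 1` with a service at `i`, and sorting the two arrivals,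
changes the queue lengths `Q^{≤k}` only at time `i - 1`: before that nothing has changed, and by
time `i` both systems have seen the same arrivals and one service, which by Lindley's recursion
`Q_j = max 0 (Q_{j-1} + [a j ≤ k] - [s j = 1])` leaves the same queue, because
`max 0 (q + α + β - 1) = max 0 (q + (α ∨ β) - 1) + (α ∧ β)` for `q ≥ 0`. Hence the departures
agree off `{i - 1, i}`, both are `∞` at `i`, and the departure at `i - 1` of the swapped system
sees the same data `Q_{i-2}, a (i - 1), a i` as the original departure at `i`.
-/

open scoped Classical

noncomputable def countIcc (P : ℤ → Prop) (i j : ℤ) : ℤ :=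
  ((Finset.Icc i j).filter P).card

lemma ncard_setOf_mem_Icc_and (P : ℤ → Prop) (i j : ℤ) :
    ({r : ℤ | r ∈ Set.Icc i j ∧ P r}.ncard : ℤ) = countIcc P i j := by
  rw [countIcc, ← Set.ncard_coe_finset]
  congr
  ext r
  simp

lemma countIcc_self (P : ℤ → Prop) (j : ℤ) : countIcc P j j = if P j then 1 else 0 := by
  by_cases hP : P j <;> simp [countIcc, Finset.filter_singleton, hP]

lemma countIcc_of_le (P : ℤ → Prop) {i j : ℤ} (h : i ≤ j) :
    countIcc P i j = countIcc P i (j - 1) + if P j then 1 else 0 := by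
  have hIcc : Finset.Icc i j = insert j (Finset.Icc i (j - 1)) := by
    ext r; simp only [Finset.mem_Icc, Finset.mem_insert]; omega
  rw [countIcc, countIcc, hIcc, Finset.filter_insert]
  split_ifs with hP
  · rw [Finset.card_insert_of_notMem (by simp)]; push_cast; ring
  · ring

lemma countIcc_congr {P P' : ℤ → Prop} {i j : ℤ} (h : ∀ r, i ≤ r → r ≤ j → (P r ↔ P' r)) :
    countIcc P i j = countIcc P' i j := by
  unfold countIcc
  congr 2
  exact Finset.filter_congr fun r hr => h r (Finset.mem_Icc.1 hr).1 (Finset.mem_Icc.1 hr).2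

section QLen

variable {a s a' s' : ℤ → ℕ∞} {k : ℕ} {j : ℤ} {u v : ℤ}

lemma QLen_iff :
    QLen a s k j v ↔ IsGreatest
      {w : ℤ | ∃ i ≤ j, w = max 0
        (countIcc (fun r => a r ≤ (k : ℕ∞)) i j - countIcc (fun r => s r = 1) i j)} v := by
  simp only [QLen, ncard_setOf_mem_Icc_and]

lemma QLen.nonneg_s10 (h : QLen a s k j v) : 0 ≤ v := by
  obtain ⟨i, -, rfl⟩ := h.1
  exact le_max_left _ _

/-- Lindley's recursion for the queue length. -/
lemma QLen.step (h : QLen a s k (j - 1) u) :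
    QLen a s k j (max 0 (u + (if a j ≤ (k : ℕ∞) then 1 else 0) - if s j = 1 then 1 else 0)) := by
  have hu := h.nonneg_s10
  rw [QLen_iff] at h ⊢
  constructor
  · obtain ⟨i₀, hi₀, hw⟩ := h.1
    by_cases hpos : 0 ≤ countIcc (fun r => a r ≤ (k : ℕ∞)) i₀ (j - 1)
        - countIcc (fun r => s r = 1) i₀ (j - 1)
    · refine ⟨i₀, by omega, ?_⟩
      rw [countIcc_of_le _ (by omega : i₀ ≤ j), countIcc_of_le (fun r => s r = 1) (by omega)]
      split_ifs <;> omega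
    · refine ⟨j, le_rfl, ?_⟩
      rw [countIcc_self, countIcc_self]
      split_ifs <;> omega
  · rintro w ⟨i₁, hi₁, rfl⟩
    rcases hi₁.eq_or_lt with rfl | hlt
    · rw [countIcc_self, countIcc_self]
      split_ifs <;> omega
    · have hle := h.2 ⟨i₁, by omega, rfl⟩
      rw [countIcc_of_le _ hi₁, countIcc_of_le (fun r => s r = 1) hi₁]
      split_ifs <;> omega

lemma QLen.step_of_ne_one (h : QLen a s k (j - 1) u) (hs : s j ≠ 1) :
    QLen a s k j (u + if a j ≤ (k : ℕ∞) then 1 else 0) := by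
  have hu := h.nonneg_s10
  have h' := h.step
  rwa [if_neg hs, sub_zero, max_eq_right (by split_ifs <;> omega)] at h'

lemma QLen.of_eq_of_le (ha : ∀ r ≤ j, a' r = a r) (hs : ∀ r ≤ j, s' r = s r)
    (h : QLen a' s' k j v) : QLen a s k j v := by
  have hca : ∀ i,
      countIcc (fun r => a' r ≤ (k : ℕ∞)) i j = countIcc (fun r => a r ≤ (k : ℕ∞)) i j :=
    fun i => countIcc_congr fun r _ hr => by rw [ha r hr]
  have hcs : ∀ i, countIcc (fun r => s' r = 1) i j = countIcc (fun r => s r = 1) i j :=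
    fun i => countIcc_congr fun r _ hr => by rw [hs r hr]
  rw [QLen_iff] at h ⊢
  simpa only [hca, hcs] using h

lemma QLen.eq_of_eq_of_lt {Q Q' : ℤ → ℤ} (hQ : ∀ j, QLen a s k j (Q j))
    (hQ' : ∀ j, QLen a' s' k j (Q' j)) {j₀ : ℤ} (h₀ : Q' j₀ = Q j₀)
    (ha : ∀ r, j₀ < r → a' r = a r) (hs : ∀ r, j₀ < r → s' r = s r) :
    ∀ j, j₀ ≤ j → Q' j = Q j := by
  refine Int.leInduction h₀ fun j hj ih => ?_
  have h := (hQ' (j + 1)).unique (hQ' (j + 1 - 1)).step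
  rw [(hQ (j + 1)).unique (hQ (j + 1 - 1)).step, h, add_sub_cancel_right,
    ha _ (by omega), hs _ (by omega), ih]

end QLen

section swapPair

variable (u : ℤ → ℕ∞) (i : ℤ)

lemma swapPair_pred : swapPair u i (i - 1) = min (u (i - 1)) (u i) := if_pos rfl

lemma swapPair_self : swapPair u i i = max (u (i - 1)) (u i) := by
  simp [swapPair, show i ≠ i - 1 by omega]

lemma swapPair_of_ne {j : ℤ} (h₁ : j ≠ i - 1) (h₂ : j ≠ i) : swapPair u i j = u j := by
  simp [swapPair, h₁, h₂]

end swapPair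

lemma max_zero_add_ite_add_ite_sub_one {q : ℤ} (hq : 0 ≤ q) (p r : Prop)
    [Decidable p] [Decidable r] :
    max 0 (q + (if p then 1 else 0) + (if r then 1 else 0) - 1)
      = max 0 (q + (if p ∨ r then 1 else 0) - 1) + if p ∧ r then 1 else 0 := by
  by_cases hp : p <;> by_cases hr : r <;> simp [hp, hr]; omega

lemma QLen_swapPair_eq {a s : ℤ → ℕ∞} {k : ℕ} {Q Q' : ℤ → ℤ} {i : ℤ}
    (hQ : ∀ j, QLen a s k j (Q j)) (hQ' : ∀ j, QLen (swapPair a i) (swapPair s i) k j (Q' j))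
    (hs₁ : s (i - 1) = ⊤) (hs₂ : s i = 1) {j : ℤ} (hj : j ≠ i - 1) : Q' j = Q j := by
  have h_low : ∀ j ≤ i - 2, Q' j = Q j := fun j hj =>
    ((hQ' j).of_eq_of_le (fun r _ => swapPair_of_ne a i (by omega) (by omega))
      (fun r _ => swapPair_of_ne s i (by omega) (by omega))).unique (hQ j)
  have h_at : Q' i = Q i := by
    have hpred : i - 1 - 1 = i - 2 := by ring
    have hq := (hQ (i - 2)).nonneg_s10
    have hs'₁ : swapPair s i (i - 1) = 1 := by
      rw [swapPair_pred, hs₁, hs₂, min_eq_right le_top]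
    have hs'₂ : swapPair s i i ≠ 1 := by rw [swapPair_self, hs₁, hs₂, max_eq_left le_top]; simp
    rw [(hQ' i).unique ((hQ' (i - 1)).step_of_ne_one hs'₂),
      (hQ' (i - 1)).unique (hQ' (i - 1 - 1)).step, (hQ i).unique (hQ (i - 1)).step,
      (hQ (i - 1)).unique ((hQ (i - 1 - 1)).step_of_ne_one (by simp [hs₁])), hpred,
      h_low _ le_rfl, swapPair_self, swapPair_pred, hs'₁, hs₂]
    simp only [min_le_iff, max_le_iff, if_true]
    exact (max_zero_add_ite_add_ite_sub_one hq _ _).symm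
  rcases le_or_gt j (i - 2) with hj' | hj'
  · exact h_low j hj'
  · exact QLen.eq_of_eq_of_lt hQ hQ' h_at (fun r hr => swapPair_of_ne a i (by omega) (by omega))
      (fun r hr => swapPair_of_ne s i (by omega) (by omega)) j (by omega)

lemma pos_add_ite_iff {q : ℤ} (hq : 0 ≤ q) (p : Prop) [Decidable p] :
    0 < q + (if p then 1 else 0) ↔ 0 < q ∨ p := by
  by_cases hp : p <;> simp [hp]; omega

lemma ENat.le_of_forall_le_imp_le {m : ℕ} {x y : ℕ∞} (hx : x ≤ (m + 1 : ℕ)) (hy : 1 ≤ y)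
    (h : ∀ k : ℕ, 1 ≤ k → k ≤ m → y ≤ k → x ≤ k) : x ≤ y := by
  by_contra! hlt
  lift y to ℕ using ((hlt.trans_le hx).trans (ENat.natCast_lt_top _)).ne
  have hym : y < m + 1 := by exact_mod_cast hlt.trans_le hx
  exact (h y (by exact_mod_cast hy) (by omega) le_rfl).not_gt hlt

/-- The hypotheses are the clauses of `isOutput` at a single time. -/
lemma eq_of_departure_conditions {m : ℕ} {x y : ℕ∞} {p p' R R' : Prop} {P P' : ℕ → Prop}
    (hx : (x = ⊤ ↔ p) ∧ (∀ k : ℕ, 1 ≤ k → k ≤ m → (x ≤ k ↔ P k)) ∧ R ∧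
      (x = ⊤ ∨ 1 ≤ x ∧ x ≤ ((m + 1 : ℕ) : ℕ∞)))
    (hy : (y = ⊤ ↔ p') ∧ (∀ k : ℕ, 1 ≤ k → k ≤ m → (y ≤ k ↔ P' k)) ∧ R' ∧
      (y = ⊤ ∨ 1 ≤ y ∧ y ≤ ((m + 1 : ℕ) : ℕ∞)))
    (hp : p ↔ p') (hP : ∀ k : ℕ, 1 ≤ k → k ≤ m → (P k ↔ P' k)) : x = y := by
  obtain ⟨hxt, hxk, -, hx | ⟨hx₁, hx₂⟩⟩ := hx
  · rw [hx, eq_comm, hy.1, ← hp, ← hxt, hx]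
  obtain ⟨hyt, hyk, -, hy | ⟨hy₁, hy₂⟩⟩ := hy
  · exact absurd (hxt.mpr (hp.mpr (hyt.mp hy))) (hx₂.trans_lt (ENat.natCast_lt_top _)).ne
  refine le_antisymm (ENat.le_of_forall_le_imp_le hx₂ hy₁ fun k h₁ h₂ hk => ?_)
    (ENat.le_of_forall_le_imp_le hy₂ hx₁ fun k h₁ h₂ hk => ?_)
  · exact (hxk k h₁ h₂).mpr ((hP k h₁ h₂).mpr ((hyk k h₁ h₂).mp hk))
  · exact (hyk k h₁ h₂).mpr ((hP k h₁ h₂).mp ((hxk k h₁ h₂).mp hk))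

theorem stmt_10_general (m : ℕ) (a s d : ℤ → ℕ∞)
    (hd : isOutput m a s d)
    (i : ℤ) (hs1 : s (i - 1) = ⊤) (hs2 : s i = 1) :
    ∀ d' : ℤ → ℕ∞,
      isOutput m (swapPair a i) (swapPair s i) d' → d' = swapPair d i := by
  rintro d' ⟨Q', hQ', hd'⟩
  obtain ⟨Q, hQ, hd⟩ := hd
  have hQQ' : ∀ k j, j ≠ i - 1 → Q' j k = Q j k := fun k _ hj =>
    QLen_swapPair_eq (fun j => hQ j k) (fun j => hQ' j k) hs1 hs2 hj
  have hdi : d (i - 1) = ⊤ := (hd (i - 1)).1.mpr hs1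
  funext j
  by_cases hj : j = i
  · subst hj
    rw [swapPair_self, hdi, max_eq_left le_top, (hd' j).1, swapPair_self, hs1, max_eq_left le_top]
  by_cases hj' : j = i - 1
  · subst hj'
    rw [swapPair_pred, hdi, min_eq_right le_top]
    refine eq_of_departure_conditions (hd' _) (hd i) ?_ fun k _ _ => ?_
    · simp [swapPair_pred, hs1, hs2]
    · rw [swapPair_pred, swapPair_pred, hs1, hs2, min_eq_right le_top, hQQ' k _ (by omega),
        (hQ (i - 1) k).unique ((hQ (i - 1 - 1) k).step_of_ne_one (by simp [hs1])),
        pos_add_ite_iff (hQ (i - 1 - 1) k).nonneg_s10, min_le_iff, or_assoc]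
  · rw [swapPair_of_ne _ _ hj' hj]
    refine eq_of_departure_conditions (hd' j) (hd j) ?_ fun k _ _ => ?_
    · rw [swapPair_of_ne _ _ hj' hj]
    · rw [swapPair_of_ne _ _ hj' hj, swapPair_of_ne _ _ hj' hj, hQQ' k _ (by omega)]

/-- Lemma 4.3, Case 2: if `s(i−1) = ∞` and `s(i) = 1` then, with `b = i`,
`F_m(a^{(i−1,i)}, s^{(i−1,i)}) = F_m(a,s)^{(i−1,i)}`. -/
theorem stmt_10 (m : ℕ) (a s d : ℤ → ℕ∞)
    (ha : ∀ j, a j = ⊤ ∨ ((1 : ℕ∞) ≤ a j ∧ a j ≤ ((m : ℕ) : ℕ∞)))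
    (hs : ∀ j, s j = 1 ∨ s j = ⊤)
    (hd : isOutput m a s d)
    (i : ℤ) (hs1 : s (i - 1) = ⊤) (hs2 : s i = 1) :
    ∀ d' : ℤ → ℕ∞,
      isOutput m (swapPair a i) (swapPair s i) d' → d' = swapPair d i :=
  stmt_10_general m a s d hd i hs1 hs2
end

section
/- Let d be a configuration on ℤ_N with values in {1,…,m+1,∞}. Define G_m(d)(j) = ∞ if d(j) ∈ {m+1, ∞} and G_m(d)(j) = d(j) if d(j) ≤ m, and H(d)(j) = 1 if d(j) < ∞, ∞ otherwise. Then F^{(N)}_m(G_m(d), H(d)) = d. -/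
open scoped Classical

/-- `QLenC N a s k j v`: `v` is the cyclic queue-length `Q_j^{≤k}`, the (attained)
supremum over all `i ∈ ℤ_N` of `[#{r∈[i,j] : a(r) ≤ k} − #{r∈[i,j] : s(r)=1}]_+`. -/
def QLenC (N : ℕ) (a s : ZMod N → ℕ∞) (k : ℕ) (j : ZMod N) (v : ℤ) : Prop :=
  IsGreatest
    {w : ℤ | ∃ i : ZMod N, w = max 0
      (({r : ZMod N | r ∈ cycIcc N i j ∧ a r ≤ (k : ℕ∞)}.ncard : ℤ)
        - ({r : ZMod N | r ∈ cycIcc N i j ∧ s r = 1}.ncard : ℤ))} v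

/-- `isOutputC N m a s d`: `d = F^{(N)}_m(a,s)` for the cyclic multiclass queueing
operator: `d(j) = ∞` iff `s(j) = ∞`; for `1 ≤ k ≤ m`, `d(j) ≤ k` iff `s(j)=1` and
(`Q_{j−1}^{≤k} > 0` or `a(j) ≤ k`); `d(j) = m+1` when `s(j)=1`, `Q_{j−1}^{≤m}=0`,
`a(j) = ∞`; and `d` takes values in `{1,…,m+1,∞}`. -/
def isOutputC (N m : ℕ) (a s d : ZMod N → ℕ∞) : Prop :=
  ∃ Q : ZMod N → ℕ → ℤ,
    (∀ (j : ZMod N) (k : ℕ), QLenC N a s k j (Q j k)) ∧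
    ∀ j : ZMod N,
      (d j = ⊤ ↔ s j = ⊤) ∧
      (∀ k : ℕ, 1 ≤ k → k ≤ m →
        (d j ≤ (k : ℕ∞) ↔ s j = 1 ∧ (0 < Q (j - 1) k ∨ a j ≤ (k : ℕ∞)))) ∧
      (s j = 1 ∧ Q (j - 1) m = 0 ∧ a j = ⊤ → d j = ((m + 1 : ℕ) : ℕ∞)) ∧
      (d j = ⊤ ∨ ((1 : ℕ∞) ≤ d j ∧ d j ≤ ((m + 1 : ℕ) : ℕ∞)))

/-- `H(d)`: the service process determined by `d`; `H(d)(j) = 1` iff `d(j) < ∞`. -/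
noncomputable def Hserv {N : ℕ} (d : ZMod N → ℕ∞) : ZMod N → ℕ∞ :=
  fun j => if d j = ⊤ then ⊤ else 1

/-- `G_m(d)`: the arrival process obtained from `d` by replacing every value `m+1`
(unused service) by `∞` and keeping the other values. -/
noncomputable def Garr {N : ℕ} (m : ℕ) (d : ZMod N → ℕ∞) : ZMod N → ℕ∞ :=
  fun j => if d j = ⊤ ∨ d j = ((m + 1 : ℕ) : ℕ∞) then ⊤ else d j

/-- Lemma 5.2(ii): for any configuration `d` on `ℤ_N` with values in
`{1,…,m+1,∞}`, one has `F^{(N)}_m(G_m(d), H(d)) = d`. -/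
theorem stmt_14 (N m : ℕ) [NeZero N] (d : ZMod N → ℕ∞)
    (hd : ∀ j, d j = ⊤ ∨ ((1 : ℕ∞) ≤ d j ∧ d j ≤ ((m + 1 : ℕ) : ℕ∞))) :
    isOutputC N m (Garr m d) (Hserv d) d := by
  set a := Garr m d with ha
  set s := Hserv d with hs
  have haval : ∀ r : ZMod N, ∀ k : ℕ, a r ≤ (k : ℕ∞) → d r ≠ ⊤ ∧ a r = d r := by
    intro r k h
    by_cases hc : d r = ⊤ ∨ d r = ((m + 1 : ℕ) : ℕ∞)
    · exfalso
      have : a r = ⊤ := by rw [ha]; unfold Garr; rw [if_pos hc]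
      rw [this] at h
      exact (ENat.coe_ne_top k) (top_le_iff.mp h)
    · push_neg at hc
      exact ⟨hc.1, by rw [ha]; unfold Garr; rw [if_neg (not_or.mpr ⟨hc.1, hc.2⟩)]⟩
  have hsub : ∀ (k : ℕ) (i j : ZMod N),
      {r : ZMod N | r ∈ cycIcc N i j ∧ a r ≤ (k : ℕ∞)} ⊆
      {r : ZMod N | r ∈ cycIcc N i j ∧ s r = 1} := by
    intro k i j r hr
    obtain ⟨h1, h2⟩ := hr
    refine ⟨h1, ?_⟩
    have := (haval r k h2).1
    simp [hs, Hserv, this]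
  refine ⟨fun _ _ => 0, ?_, ?_⟩
  · intro j k
    constructor
    · refine ⟨j, ?_⟩
      have := Set.ncard_le_ncard (hsub k j j) (Set.toFinite _)
      show (0 : ℤ) = _
      omega
    · rintro w ⟨i, rfl⟩
      have := Set.ncard_le_ncard (hsub k i j) (Set.toFinite _)
      show _ ≤ (0 : ℤ)
      omega
  · intro j
    refine ⟨?_, ?_, ?_, hd j⟩
    · constructor
      · intro h; simp [hs, Hserv, h]
      · intro h
        by_contra hne
        simp [hs, Hserv, hne] at h
    · intro k hk1 hkm
      constructor
      · intro h
        have hne : d j ≠ ⊤ := by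
          intro ht; rw [ht] at h; exact (ENat.coe_ne_top k) (top_le_iff.mp h)
        have hnm : d j ≠ ((m + 1 : ℕ) : ℕ∞) := by
          intro he
          rw [he] at h
          have := (Nat.cast_le (α := ℕ∞)).mp h
          omega
        refine ⟨by simp [hs, Hserv, hne], Or.inr ?_⟩
        have : a j = d j := by
          rw [ha]; unfold Garr; rw [if_neg (not_or.mpr ⟨hne, hnm⟩)]
        rw [this]; exact h
      · rintro ⟨hs1, h0 | hak⟩
        · exact absurd h0 (lt_irrefl 0)
        · rw [← (haval j k hak).2]; exact hak
    · rintro ⟨hs1, -, hat⟩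
      have hne : d j ≠ ⊤ := by
        intro ht; simp [hs, Hserv, ht] at hs1
      by_contra hnm
      have : a j = d j := by
        rw [ha]; unfold Garr; rw [if_neg (not_or.mpr ⟨hne, hnm⟩)]
      rw [this] at hat
      exact hne hat
end
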